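/- Let (X,d) be a separable metric space such that the action (Iso(X),X) is Cauchy-indivisible. Then the subset X ∪ X_l of X̂ is E-invariant, i.e., f(X ∪ X_l) ⊆ X ∪ X_l for every f ∈ E. -/

import Mathlib

open Filter Topology Set UniformSpace

noncomputable section

/-- The topology of pointwise convergence on the group of surjective isometries of `X`. -/
instance isoPointwiseTopology (X : Type*) [MetricSpace X] : TopologicalSpace (X ≃ᵢ X) :=
  TopologicalSpace.induced (fun g => (g : X → X)) Pi.topologicalSpace

/-- A net `g` diverges (`g_i → ∞`), i.e. it has no convergent subnet; equivalently,
no cluster point. -/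
def DivergentNet {G : Type*} [TopologicalSpace G] {ι : Type*} [Preorder ι]
    (g : ι → G) : Prop :=
  ∀ h : G, ¬ MapClusterPt h atTop g

/-- A sequence `g` diverges (`g_n → ∞`), i.e. it has no convergent subsequence. -/
def DivergentSeq {G : Type*} [TopologicalSpace G] (g : ℕ → G) : Prop :=
  ∀ φ : ℕ → ℕ, StrictMono φ → ∀ h : G, ¬ Tendsto (g ∘ φ) atTop (𝓝 h)

/-- The natural evaluation action of `Iso(X)` on `X` is Cauchy-indivisible: whenever a
net `g` in `Iso(X)` has no convergent subnet and `(g_i x)` is a Cauchy net for some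
`x`, then `(g_i y)` is a Cauchy net for every `y`. -/
def IsoCauchyIndivisible (X : Type*) [MetricSpace X] : Prop :=
  ∀ (ι : Type*) [Nonempty ι] [Preorder ι] [IsDirected ι (· ≤ ·)],
    ∀ g : ι → X ≃ᵢ X, DivergentNet g →
      (∃ x : X, Cauchy (map (fun i => g i x) atTop)) →
      ∀ y : X, Cauchy (map (fun i => g i y) atTop)

/-- Properness of the isometric evaluation action, expressed through emptiness of all
limit sets `L(x)`: no net in `Iso(X)` without convergent subnet has `(g_i x)`
converging in `X`. -/
def IsoProperLimits (X : Type*) [MetricSpace X] : Prop :=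
  ∀ (ι : Type*) [Nonempty ι] [Preorder ι] [IsDirected ι (· ≤ ·)],
    ∀ g : ι → X ≃ᵢ X, DivergentNet g →
      ∀ x y : X, ¬ Tendsto (fun i => g i x) atTop (𝓝 y)

/-- The canonical lift `ĝ` of an isometry of `X` to the completion `X̂`. -/
def hatIso {X : Type*} [MetricSpace X] (g : X ≃ᵢ X) : Completion X → Completion X :=
  Completion.map (g : X → X)

/-- The lifted group `{ĝ : g ∈ Iso(X)}` inside the selfmaps of `X̂`. -/
def hatIsoSet (X : Type*) [MetricSpace X] : Set (Completion X → Completion X) :=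
  Set.range (hatIso (X := X))

/-- The Ellis semigroup `E`: the closure of the lifted group `{ĝ}` in the topology of
pointwise convergence on selfmaps of `X̂`. -/
def Ellis (X : Type*) [MetricSpace X] : Set (Completion X → Completion X) :=
  closure (hatIsoSet X)

/-- The set `H` of pointwise limits on `X̂` of divergent sequences of lifted isometries. -/
def Hset (X : Type*) [MetricSpace X] : Set (Completion X → Completion X) :=
  { h | Continuous h ∧ ∃ g : ℕ → X ≃ᵢ X, DivergentSeq g ∧
      Tendsto (fun n => hatIso (g n)) atTop (𝓝 h) }

/-- The set `X_l ⊆ X̂` of limit points of the action `(Iso(X), X)` in the completion. -/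
def Xl (X : Type*) [MetricSpace X] : Set (Completion X) :=
  { y | ∃ (g : ℕ → X ≃ᵢ X) (x : X), DivergentSeq g ∧
      CauchySeq (fun n => g n x) ∧
      Tendsto (fun n => ((g n x : X) : Completion X)) atTop (𝓝 y) }

/-- The set `X_p ⊆ X̂` of special limit points of the action `(Iso(X), X)`. -/
def Xp (X : Type*) [MetricSpace X] : Set (Completion X) :=
  { y | ∃ (g : ℕ → X ≃ᵢ X) (x : X), DivergentSeq g ∧
      CauchySeq (fun n => g n x) ∧ CauchySeq (fun n => (g n).symm x) ∧
      Tendsto (fun n => ((g n x : X) : Completion X)) atTop (𝓝 y) }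

/-- `X ∪ X_l`, with `X` identified with its image in the completion `X̂`. -/
def XcupXl (X : Type*) [MetricSpace X] : Set (Completion X) :=
  Set.range ((↑) : X → Completion X) ∪ Xl X

/-- `X ∪ X_p`, with `X` identified with its image in the completion `X̂`. -/
def XcupXp (X : Type*) [MetricSpace X] : Set (Completion X) :=
  Set.range ((↑) : X → Completion X) ∪ Xp X

/-- The Ellis semigroup is a group: every element has a two-sided inverse in `E`
(under composition). -/
def EllisIsGroup (X : Type*) [MetricSpace X] : Prop :=
  ∀ f ∈ Ellis X, ∃ g ∈ Ellis X, f ∘ g = id ∧ g ∘ f = id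

/-!
The Ellis semigroup `E` is closed under composition. For `x ∈ X`, `f x` is a limit of orbit
points `g_n x`, so it lies in `X` or in `X_l` according to whether `(g_n)` has a convergent
subsequence or not. For `y = lim g_n x ∈ X_l`, Cauchy-indivisibility makes every orbit `(g_n z)`
Cauchy; since the `ĝ_n` are isometries, they converge pointwise on `X̂` to some `p ∈ E` with
`p x = y`, and `f y = (f ∘ p) x` falls under the first case.

Separability is what makes the pointwise topology on `Iso(X)` first countable, so that a sequence
without convergent subsequence is also a net without convergent subnet.
-/

universe u v

theorem cauchySeq_apply_of_dense {α β : Type*} [PseudoMetricSpace α] [PseudoMetricSpace β]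
    {F : ℕ → α → β} (hF : ∀ n, Isometry (F n)) {s : Set α} (hs : Dense s)
    (h : ∀ z ∈ s, CauchySeq fun n => F n z) (x : α) : CauchySeq fun n => F n x := by
  rw [Metric.cauchySeq_iff]
  intro ε hε
  obtain ⟨z, hzs, hxz⟩ := hs.exists_dist_lt x (by positivity : 0 < ε / 3)
  obtain ⟨N, hN⟩ := Metric.cauchySeq_iff.1 (h z hzs) (ε / 3) (by positivity)
  refine ⟨N, fun m hm n hn => ?_⟩
  calc dist (F m x) (F n x)
      ≤ dist (F m x) (F m z) + dist (F m z) (F n z) + dist (F n z) (F n x) :=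
        dist_triangle4 _ _ _ _
    _ < ε := by
        rw [(hF m).dist_eq, (hF n).dist_eq, dist_comm z x]
        linarith [hN m hm n hn]

theorem map_uliftDown_atTop {α : Type u} [Preorder α] :
    map (ULift.down.{v} : ULift α → α) atTop = atTop :=
  (ULift.orderIso.{v} (α := α)).map_atTop

theorem DivergentSeq.divergentNet {G : Type*} [TopologicalSpace G] [FirstCountableTopology G]
    {g : ℕ → G} (hg : DivergentSeq g) : DivergentNet g := fun h hc =>
  let ⟨φ, hφ, hlim⟩ := hc.tendsto_subseq
  hg φ hφ h hlim

theorem DivergentNet.comp_uliftDown {G : Type*} [TopologicalSpace G] {α : Type u} [Preorder α]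
    {g : α → G} (hg : DivergentNet g) : DivergentNet (g ∘ ULift.down.{v}) := by
  intro h hc
  rw [MapClusterPt, ← map_map, map_uliftDown_atTop] at hc
  exact hg h hc

namespace IsometryEquiv

variable {X : Type*} [MetricSpace X]

theorem tendsto_nhds_iff {ι : Type*} {l : Filter ι} {g : ι → X ≃ᵢ X} {h : X ≃ᵢ X} :
    Tendsto g l (𝓝 h) ↔ ∀ x, Tendsto (fun i => g i x) l (𝓝 (h x)) := by
  rw [nhds_induced, tendsto_comap_iff, tendsto_pi_nhds]
  rfl

theorem isInducing_restrict_of_denseRange {ι : Type*} {u : ι → X} (hu : DenseRange u) :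
    IsInducing fun g : X ≃ᵢ X => fun i => g (u i) := by
  set r := fun g : X ≃ᵢ X => fun i => g (u i)
  have hr : Continuous r :=
    continuous_pi fun i => (continuous_apply (u i)).comp continuous_induced_dom
  refine isInducing_iff_nhds.2 fun g => le_antisymm (hr.tendsto g).le_comap ?_
  refine tendsto_id'.1 <| tendsto_nhds_iff.2 fun x => Metric.tendsto_nhds.2 fun ε hε => ?_
  obtain ⟨i, hxi⟩ := hu.exists_dist_lt x (by positivity : 0 < ε / 3)
  have hi : ∀ᶠ k in comap r (𝓝 (r g)), dist (k (u i)) (g (u i)) < ε / 3 :=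
    Metric.tendsto_nhds.1 (((continuous_apply i).tendsto (r g)).comp tendsto_comap) _
      (by positivity)
  filter_upwards [hi] with k hk
  calc dist (k x) (g x)
      ≤ dist (k x) (k (u i)) + dist (k (u i)) (g (u i)) + dist (g (u i)) (g x) :=
        dist_triangle4 _ _ _ _
    _ < ε := by
        rw [k.dist_eq, g.dist_eq, dist_comm (u i) x]
        linarith

instance firstCountableTopology [TopologicalSpace.SeparableSpace X] :
    FirstCountableTopology (X ≃ᵢ X) := by
  obtain ⟨s, hs, hd⟩ := TopologicalSpace.exists_countable_dense X
  have := hs.to_subtype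
  exact (isInducing_restrict_of_denseRange hd.denseRange_val).firstCountableTopology

end IsometryEquiv

/-- `IsoCauchyIndivisible` quantifies over index types of one fixed universe, hence the `ULift`. -/
theorem IsoCauchyIndivisible.cauchySeq {X : Type u} [MetricSpace X]
    (hCI : IsoCauchyIndivisible.{u, v} X) {g : ℕ → X ≃ᵢ X} (hg : DivergentNet g) {x : X}
    (hx : CauchySeq fun n => g n x) (y : X) : CauchySeq fun n => g n y := by
  have hmap : ∀ z : X, map (fun i : ULift.{v} ℕ => (g ∘ ULift.down) i z) atTop =
      map (fun n => g n z) atTop := fun z => by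
    rw [← map_uliftDown_atTop.{0, v}, map_map]
    rfl
  rw [CauchySeq, ← hmap]
  exact hCI (ULift ℕ) (g ∘ ULift.down) hg.comp_uliftDown ⟨x, by rw [hmap]; exact hx⟩ y

section Ellis

variable {X : Type*} [MetricSpace X]

theorem hatIso_coe (g : X ≃ᵢ X) (x : X) : hatIso g x = (g x : Completion X) :=
  Completion.map_coe g.isometry.uniformContinuous x

theorem isometry_hatIso (g : X ≃ᵢ X) : Isometry (hatIso g) :=
  g.isometry.completion_map

theorem hatIso_comp_hatIso (g k : X ≃ᵢ X) : hatIso g ∘ hatIso k = hatIso (k.trans g) :=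
  Completion.map_comp g.isometry.uniformContinuous k.isometry.uniformContinuous

theorem hatIso_comp_mem_ellis (g : X ≃ᵢ X) {p : Completion X → Completion X}
    (hp : p ∈ Ellis X) : hatIso g ∘ p ∈ Ellis X :=
  map_mem_closure (continuous_pi fun w => (isometry_hatIso g).continuous.comp (continuous_apply w))
    hp (by rintro _ ⟨k, rfl⟩; exact ⟨k.trans g, (hatIso_comp_hatIso g k).symm⟩)

theorem comp_mem_ellis {f p : Completion X → Completion X} (hf : f ∈ Ellis X)
    (hp : p ∈ Ellis X) : f ∘ p ∈ Ellis X := by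
  have := map_mem_closure (continuous_pi fun w => continuous_apply (p w)) hf
    (t := Ellis X) (by rintro _ ⟨g, rfl⟩; exact hatIso_comp_mem_ellis g hp)
  rwa [Ellis, closure_closure] at this

theorem exists_tendsto_hatIso {g : ℕ → X ≃ᵢ X} (hg : ∀ z : X, CauchySeq fun n => g n z) :
    ∃ p ∈ Ellis X, Tendsto (fun n => hatIso (g n)) atTop (𝓝 p) := by
  have hcauchy : ∀ w : Completion X, CauchySeq fun n => hatIso (g n) w := by
    refine cauchySeq_apply_of_dense (fun n => isometry_hatIso (g n)) Completion.denseRange_coe ?_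
    rintro _ ⟨z, rfl⟩
    simp only [hatIso_coe]
    exact (Completion.uniformContinuous_coe X).comp_cauchySeq (hg z)
  choose p hp using fun w => cauchySeq_tendsto_of_complete (hcauchy w)
  have hlim := tendsto_pi_nhds.2 hp
  exact ⟨p, mem_closure_of_tendsto hlim (Eventually.of_forall fun n => ⟨g n, rfl⟩), hlim⟩

theorem mem_xcupXl_of_tendsto {g : ℕ → X ≃ᵢ X} {x : X} {y : Completion X}
    (hy : Tendsto (fun n => (g n x : Completion X)) atTop (𝓝 y)) : y ∈ XcupXl X := by
  by_cases hg : DivergentSeq g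
  · refine Or.inr ⟨g, x, hg, ?_, hy⟩
    exact Completion.coe_isometry.isUniformInducing.cauchy_map_iff.1
      (by rw [map_map]; exact hy.cauchySeq)
  · simp only [DivergentSeq, not_forall, not_not] at hg
    obtain ⟨φ, hφ, h, hh⟩ := hg
    refine Or.inl ⟨h x, tendsto_nhds_unique ?_ (hy.comp hφ.tendsto_atTop)⟩
    exact ((Completion.continuous_coe X).tendsto _).comp (IsometryEquiv.tendsto_nhds_iff.1 hh x)

theorem apply_coe_mem_xcupXl {f : Completion X → Completion X} (hf : f ∈ Ellis X) (x : X) :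
    f x ∈ XcupXl X := by
  have hfx : f x ∈ closure (range fun g : X ≃ᵢ X => (g x : Completion X)) :=
    map_mem_closure (f := fun F : Completion X → Completion X => F x) (continuous_apply _) hf
      (by rintro _ ⟨g, rfl⟩; exact ⟨g, (hatIso_coe g x).symm⟩)
  obtain ⟨w, hw, hlim⟩ := mem_closure_iff_seq_limit.1 hfx
  choose g hg using hw
  exact mem_xcupXl_of_tendsto (x := x) (funext hg ▸ hlim)

end Ellis

/-- Lemma 5.11: the set `X ∪ X_l ⊆ X̂` is invariant under the Ellis semigroup `E`. -/
theorem xcupXl_ellis_invariant (X : Type*) [MetricSpace X]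
    [TopologicalSpace.SeparableSpace X] (hCI : IsoCauchyIndivisible X) :
    ∀ f ∈ Ellis X, ∀ y ∈ XcupXl X, f y ∈ XcupXl X := by
  intro f hf y hy
  rcases hy with ⟨x, rfl⟩ | ⟨g, x, hdiv, hx, hy⟩
  · exact apply_coe_mem_xcupXl hf x
  · obtain ⟨p, hpE, hp⟩ := exists_tendsto_hatIso (hCI.cauchySeq hdiv.divergentNet hx)
    have hpx : p x = y :=
      tendsto_nhds_unique (tendsto_pi_nhds.1 hp x) (by simpa only [hatIso_coe] using hy)
    simpa only [Function.comp_apply, hpx] using apply_coe_mem_xcupXl (comp_mem_ellis hf hpE) x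

end
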